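/- For every integer n ≥ 2 and every spanner S ∈ X of the graph G_n, letting T = { i ∈ {1,…,n} : {v_i, w_i} ∈ S }, one has f1(S) = Σ_{i ∈ T} 2^i and f2(S) = (n − 1) + Σ_{i ∈ T} 2^i + Σ_{i ∈ {1,…,n} \ T} 2^{i+1}. -/

import Mathlib

namespace MSpPaper

open SimpleGraph

variable {V : Type*}

/-- Minimum total `c2`-weight of a walk from `u` to `v` using only edges in `F`
(the set of weights of such walks is a set of naturals; its infimum is `0` when no walk exists). -/
noncomputable def wdist (F : Set (Sym2 V)) (c2 : Sym2 V → ℕ) (u v : V) : ℕ :=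
  sInf (Set.range fun p : (SimpleGraph.fromEdgeSet F).Walk u v => (p.edges.map c2).sum)

/-- `S` is a spanner of `G`: a subset of the edges such that the resulting subgraph is connected. -/
def IsSpanner (G : SimpleGraph V) (S : Set (Sym2 V)) : Prop :=
  S ⊆ G.edgeSet ∧ (SimpleGraph.fromEdgeSet S).Connected

/-- First objective: total `c1`-cost of the spanner. -/
def f1 (c1 : Sym2 V → ℤ) (S : Finset (Sym2 V)) : ℤ := ∑ e ∈ S, c1 e

open scoped Classical in
/-- Second objective (stretch factor): maximum over pairs of distinct vertices of the
distance ratio `d^S(u,v)/d^E(u,v)` (junk value `0` if there is no pair of distinct vertices). -/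
noncomputable def f2 [Fintype V] (E S : Set (Sym2 V)) (c2 : Sym2 V → ℕ) : ℚ :=
  if h : ((Finset.univ : Finset (V × V)).filter fun p => p.1 ≠ p.2).Nonempty then
    ((Finset.univ : Finset (V × V)).filter fun p => p.1 ≠ p.2).sup' h
      (fun p => (wdist S c2 p.1 p.2 : ℚ) / (wdist E c2 p.1 p.2 : ℚ))
  else 0

/-- The value vector of a spanner. -/
noncomputable def valueVec [Fintype V] (G : SimpleGraph V) (c1 : Sym2 V → ℤ) (c2 : Sym2 V → ℕ)
    (S : Finset (Sym2 V)) : ℚ × ℚ :=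
  ((f1 c1 S : ℚ), f2 G.edgeSet (↑S) c2)

/-- `y'` dominates `y`: componentwise `≤` and unequal. -/
def Dominates (y' y : ℚ × ℚ) : Prop := y' ≤ y ∧ y' ≠ y

/-- The non-dominated set of an MSp instance. -/
def YN [Fintype V] (G : SimpleGraph V) (c1 : Sym2 V → ℤ) (c2 : Sym2 V → ℕ) : Set (ℚ × ℚ) :=
  {y | (∃ S : Finset (Sym2 V), IsSpanner G (↑S) ∧ valueVec G c1 c2 S = y) ∧
       ∀ S' : Finset (Sym2 V), IsSpanner G (↑S') → ¬ Dominates (valueVec G c1 c2 S') y}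


/-! ### The family of instances `G_n` from Section 3 -/

/-- Vertices of `G_n`: for each `i`, the vertex `(i,0)` is `v_i`, `(i,1)` is `v_i'`,
and `(i,2)` is `w_i`. -/
abbrev Vtx (n : ℕ) := Fin n × Fin 3

/-- The weights `(c1, c2)` of the (ordered) pair `a b` of vertices of `G_n`;
`(0, 0)` (in particular `c2 = 0`) marks non-edges. -/
def wtG (n : ℕ) (a b : Vtx n) : ℤ × ℕ :=
  if a.2 = 0 ∧ b.2 = 2 ∧ a.1 = b.1 then (2 ^ ((a.1 : ℕ) + 1), 2 ^ ((a.1 : ℕ) + 1))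
  else if a.2 = 0 ∧ b.2 = 1 ∧ a.1 = b.1 then (0, 2 ^ ((a.1 : ℕ) + 1))
  else if a.2 = 1 ∧ b.2 = 2 ∧ a.1 = b.1 then (0, 2 ^ ((a.1 : ℕ) + 1))
  else if a.2 = 2 ∧ b.2 = 0 ∧ (b.1 : ℕ) = (a.1 : ℕ) + 1 then (0, 1)
  else if a.2 = 0 ∧ b.2 = 2 ∧ (a.1 : ℕ) = 0 ∧ (b.1 : ℕ) = n - 1 then (2 ^ (n + 1), 1)
  else (0, 0)

/-- The cost function `c1` of `G_n`. -/
def c1G (n : ℕ) : Sym2 (Vtx n) → ℤ :=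
  Sym2.lift ⟨fun a b => (wtG n a b).1 + (wtG n b a).1, fun _ _ => add_comm _ _⟩

/-- The length function `c2` of `G_n`. -/
def c2G (n : ℕ) : Sym2 (Vtx n) → ℕ :=
  Sym2.lift ⟨fun a b => (wtG n a b).2 + (wtG n b a).2, fun _ _ => add_comm _ _⟩

/-- The edge set of `G_n`: exactly the pairs with positive length. -/
def EG (n : ℕ) : Set (Sym2 (Vtx n)) := {e | c2G n e ≠ 0}

/-- The graph `G_n`. -/
def Gn (n : ℕ) : SimpleGraph (Vtx n) := SimpleGraph.fromEdgeSet (EG n)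

/-- The vertex `v_i`. -/
def vG (n : ℕ) (i : Fin n) : Vtx n := (i, 0)
/-- The vertex `v_i'`. -/
def pG (n : ℕ) (i : Fin n) : Vtx n := (i, 1)
/-- The vertex `w_i`. -/
def wG (n : ℕ) (i : Fin n) : Vtx n := (i, 2)
/-- The vertex `s = v_1`. -/
def sG (n : ℕ) (hn : 0 < n) : Vtx n := (⟨0, hn⟩, 0)
/-- The vertex `t = w_n`. -/
def tG (n : ℕ) (hn : 0 < n) : Vtx n := (⟨n - 1, Nat.sub_lt hn one_pos⟩, 2)

/-- Membership in `X`: spanners of `G_n` containing every edge of zero `c1`-cost and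
not containing the edge `{s, t}`. -/
def memX (n : ℕ) (hn : 0 < n) (S : Finset (Sym2 (Vtx n))) : Prop :=
  IsSpanner (Gn n) (↑S) ∧ (∀ e ∈ (Gn n).edgeSet, c1G n e = 0 → e ∈ S) ∧
    s(sG n hn, tG n hn) ∉ S

/-!
Along the chain `s = v_1, w_1, v_2, …, w_n = t`, getting from `v_i` to `w_i` inside `S` costs
`2^i` if `{v_i, w_i} ∈ S` and `2^(i+1)` (through `v_i'`) otherwise. The distance from `s` along this
chain is a potential that grows by at most `c2 e` across every edge `e ∈ S`, so `d^S(s, t)` is the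
full chain length `D`, while `d^E(s, t) = 1`. Conversely, the stretch of any pair is at most the
largest stretch of a single edge of `G_n`, and every edge is bridged in `S` within `D` times its
length. In `S`, only the edges `{v_i, w_i}` carry `c1`-cost.
-/

section Walks

variable {G : SimpleGraph V} {F E S : Set (Sym2 V)} {c : Sym2 V → ℕ} {u v : V}

def walkWeight (c : Sym2 V → ℕ) {u v : V} (p : G.Walk u v) : ℕ := (p.edges.map c).sum

@[simp] lemma walkWeight_nil : walkWeight c (Walk.nil : G.Walk u u) = 0 := rfl

@[simp] lemma walkWeight_cons {w : V} (h : G.Adj u w) (p : G.Walk w v) :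
    walkWeight c (Walk.cons h p) = c s(u, w) + walkWeight c p := by
  simp [walkWeight]

@[simp] lemma walkWeight_toWalk (h : G.Adj u v) : walkWeight c h.toWalk = c s(u, v) := by
  simp [walkWeight]

@[simp] lemma walkWeight_append {w : V} (p : G.Walk u w) (q : G.Walk w v) :
    walkWeight c (p.append q) = walkWeight c p + walkWeight c q := by
  simp [walkWeight]

@[simp] lemma walkWeight_reverse (p : G.Walk u v) : walkWeight c p.reverse = walkWeight c p := by
  simp [walkWeight, List.sum_reverse]

lemma wdist_le_walkWeight (p : (fromEdgeSet F).Walk u v) : wdist F c u v ≤ walkWeight c p :=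
  Nat.sInf_le ⟨p, rfl⟩

lemma exists_walkWeight_eq_wdist (h : (fromEdgeSet F).Reachable u v) :
    ∃ p : (fromEdgeSet F).Walk u v, walkWeight c p = wdist F c u v :=
  Nat.sInf_mem (s := Set.range (walkWeight c)) (let ⟨p⟩ := h; ⟨_, p, rfl⟩)

lemma reachable_of_wdist_ne_zero (h : wdist F c u v ≠ 0) : (fromEdgeSet F).Reachable u v := by
  by_contra hr
  have : IsEmpty ((fromEdgeSet F).Walk u v) := not_nonempty_iff.mp hr
  exact h (by rw [wdist, Set.range_eq_empty, Nat.sInf_empty])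

lemma wdist_pos (hc : ∀ e ∈ F, c e ≠ 0) (huv : u ≠ v) (h : (fromEdgeSet F).Reachable u v) :
    0 < wdist F c u v := by
  obtain ⟨p, hp⟩ := exists_walkWeight_eq_wdist (c := c) h
  cases p with
  | nil => exact absurd rfl huv
  | cons hadj p =>
    have := hc _ ((fromEdgeSet_adj F).mp hadj).1
    rw [← hp, walkWeight_cons]
    omega

lemma le_add_walkWeight {φ : V → ℕ} (hφ : ∀ x y, s(x, y) ∈ F → φ y ≤ φ x + c s(x, y))
    (p : (fromEdgeSet F).Walk u v) : φ v ≤ φ u + walkWeight c p := by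
  induction p with
  | nil => simp
  | cons hadj p ih =>
    have := hφ _ _ ((fromEdgeSet_adj F).mp hadj).1
    rw [walkWeight_cons]
    omega

lemma le_add_wdist {φ : V → ℕ} (hφ : ∀ x y, s(x, y) ∈ F → φ y ≤ φ x + c s(x, y))
    (h : (fromEdgeSet F).Reachable u v) : φ v ≤ φ u + wdist F c u v := by
  obtain ⟨p, hp⟩ := exists_walkWeight_eq_wdist (c := c) h
  exact hp ▸ le_add_walkWeight hφ p

section Stretch

variable {k : ℕ}
  (hk : ∀ x y, s(x, y) ∈ E → ∃ q : (fromEdgeSet S).Walk x y, walkWeight c q ≤ k * c s(x, y))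
include hk

lemma exists_walk_le_mul_walkWeight (p : (fromEdgeSet E).Walk u v) :
    ∃ q : (fromEdgeSet S).Walk u v, walkWeight c q ≤ k * walkWeight c p := by
  induction p with
  | nil => exact ⟨Walk.nil, by simp⟩
  | cons hadj p ih =>
    obtain ⟨q₁, hq₁⟩ := hk _ _ ((fromEdgeSet_adj E).mp hadj).1
    obtain ⟨q₂, hq₂⟩ := ih
    refine ⟨q₁.append q₂, ?_⟩
    rw [walkWeight_append, walkWeight_cons, mul_add]
    omega

lemma wdist_div_wdist_le : (wdist S c u v : ℚ) / wdist E c u v ≤ k := by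
  rcases eq_or_ne (wdist E c u v) 0 with h0 | h0
  · simp [h0]
  obtain ⟨p, hp⟩ := exists_walkWeight_eq_wdist (c := c) (reachable_of_wdist_ne_zero h0)
  obtain ⟨q, hq⟩ := exists_walk_le_mul_walkWeight hk p
  rw [div_le_iff₀ (by positivity)]
  exact_mod_cast hp ▸ (wdist_le_walkWeight q).trans hq

end Stretch

lemma f2_eq_of_forall_le [Fintype V] {r : ℚ}
    (hle : ∀ x y, x ≠ y → (wdist S c x y : ℚ) / wdist E c x y ≤ r) (huv : u ≠ v)
    (heq : (wdist S c u v : ℚ) / wdist E c u v = r) : f2 E S c = r := by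
  classical
  have hmem : (u, v) ∈ (Finset.univ : Finset (V × V)).filter fun p => p.1 ≠ p.2 := by simpa
  rw [f2, dif_pos ⟨_, hmem⟩]
  refine le_antisymm (Finset.sup'_le _ _ fun p hp => hle _ _ (by simpa using hp)) ?_
  exact heq ▸ Finset.le_sup' (fun p : V × V => (wdist S c p.1 p.2 : ℚ) / wdist E c p.1 p.2) hmem

end Walks


section Gn

variable {n : ℕ}

/-- The edges of `G_n`, each with a fixed orientation. -/
inductive GnArc (n : ℕ) : Vtx n → Vtx n → Prop
  | vw (i : Fin n) : GnArc n (vG n i) (wG n i)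
  | vp (i : Fin n) : GnArc n (vG n i) (pG n i)
  | pw (i : Fin n) : GnArc n (pG n i) (wG n i)
  | wv (i : Fin n) (hi : (i : ℕ) + 1 < n) : GnArc n (wG n i) (vG n ⟨i + 1, hi⟩)
  | st (hn : 2 ≤ n) : GnArc n (sG n (Nat.zero_lt_of_lt hn)) (tG n (Nat.zero_lt_of_lt hn))

lemma c2G_mk (a b : Vtx n) : c2G n s(a, b) = (wtG n a b).2 + (wtG n b a).2 := rfl

lemma c1G_mk (a b : Vtx n) : c1G n s(a, b) = (wtG n a b).1 + (wtG n b a).1 := rfl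

@[simp] lemma c2G_vw (i : Fin n) : c2G n s(vG n i, wG n i) = 2 ^ ((i : ℕ) + 1) := by
  simp [c2G_mk, wtG, vG, wG]

@[simp] lemma c2G_vp (i : Fin n) : c2G n s(vG n i, pG n i) = 2 ^ ((i : ℕ) + 1) := by
  simp [c2G_mk, wtG, vG, pG]

@[simp] lemma c2G_pw (i : Fin n) : c2G n s(pG n i, wG n i) = 2 ^ ((i : ℕ) + 1) := by
  simp [c2G_mk, wtG, pG, wG]

@[simp] lemma c2G_wv (i : Fin n) (hi : (i : ℕ) + 1 < n) :
    c2G n s(wG n i, vG n ⟨i + 1, hi⟩) = 1 := by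
  simp [c2G_mk, wtG, vG, wG, Fin.ext_iff]

@[simp] lemma c2G_st (hn : 2 ≤ n) :
    c2G n s(sG n (Nat.zero_lt_of_lt hn), tG n (Nat.zero_lt_of_lt hn)) = 1 := by
  simp [c2G_mk, wtG, sG, tG, Fin.ext_iff, show 0 ≠ n - 1 by omega]

@[simp] lemma c1G_vw (i : Fin n) : c1G n s(vG n i, wG n i) = 2 ^ ((i : ℕ) + 1) := by
  simp [c1G_mk, wtG, vG, wG]

@[simp] lemma c1G_vp (i : Fin n) : c1G n s(vG n i, pG n i) = 0 := by
  simp [c1G_mk, wtG, vG, pG]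

@[simp] lemma c1G_pw (i : Fin n) : c1G n s(pG n i, wG n i) = 0 := by
  simp [c1G_mk, wtG, pG, wG]

@[simp] lemma c1G_wv (i : Fin n) (hi : (i : ℕ) + 1 < n) :
    c1G n s(wG n i, vG n ⟨i + 1, hi⟩) = 0 := by
  simp [c1G_mk, wtG, vG, wG, Fin.ext_iff]

lemma gnArc_of_wtG_ne_zero {a b : Vtx n} (h : (wtG n a b).2 ≠ 0) : GnArc n a b := by
  obtain ⟨i, a⟩ := a
  obtain ⟨j, b⟩ := b
  unfold wtG at h
  split_ifs at h with h₁ h₂ h₃ h₄ h₅ <;> dsimp only at *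
  · obtain ⟨rfl, rfl, rfl⟩ := h₁
    exact .vw i
  · obtain ⟨rfl, rfl, rfl⟩ := h₂
    exact .vp i
  · obtain ⟨rfl, rfl, rfl⟩ := h₃
    exact .pw i
  · obtain ⟨rfl, rfl, hj⟩ := h₄
    obtain ⟨j, hjn⟩ := j
    subst hj
    exact .wv i hjn
  · obtain ⟨rfl, rfl, hi, hj⟩ := h₅
    have hn : 2 ≤ n := by
      by_contra
      exact h₁ ⟨rfl, rfl, Fin.ext (by omega)⟩
    obtain ⟨i, _⟩ := i
    obtain ⟨j, _⟩ := j
    dsimp only at hi hj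
    subst hi hj
    exact .st hn
  · exact absurd rfl h

lemma gnArc_or_gnArc_of_c2G_ne_zero {a b : Vtx n} (h : c2G n s(a, b) ≠ 0) :
    GnArc n a b ∨ GnArc n b a := by
  by_cases hab : (wtG n a b).2 = 0
  · exact .inr (gnArc_of_wtG_ne_zero (by simpa [c2G_mk, hab] using h))
  · exact .inl (gnArc_of_wtG_ne_zero hab)

lemma GnArc.ne {a b : Vtx n} (h : GnArc n a b) : a ≠ b := by
  cases h <;> simp [vG, pG, wG, sG, tG, Fin.ext_iff]

lemma GnArc.c2G_ne_zero {a b : Vtx n} (h : GnArc n a b) : c2G n s(a, b) ≠ 0 := by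
  cases h <;> simp [*]

lemma adj_of_gnArc_of_mem {S : Set (Sym2 (Vtx n))} {a b : Vtx n} (h : GnArc n a b)
    (hab : s(a, b) ∈ S) : (fromEdgeSet S).Adj a b :=
  (fromEdgeSet_adj _).mpr ⟨hab, h.ne⟩

lemma mem_edgeSet_Gn {a b : Vtx n} : s(a, b) ∈ (Gn n).edgeSet ↔ c2G n s(a, b) ≠ 0 ∧ a ≠ b := by
  simp [Gn, EG]

lemma GnArc.mem_edgeSet {a b : Vtx n} (h : GnArc n a b) : s(a, b) ∈ (Gn n).edgeSet :=
  mem_edgeSet_Gn.mpr ⟨h.c2G_ne_zero, h.ne⟩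

lemma c2G_ne_zero_of_mem_edgeSet {e : Sym2 (Vtx n)} (he : e ∈ (Gn n).edgeSet) : c2G n e ≠ 0 := by
  induction e using Sym2.ind with
  | _ a b => exact (mem_edgeSet_Gn.mp he).1

lemma wdist_sG_tG_Gn (hn : 2 ≤ n) :
    wdist (Gn n).edgeSet (c2G n)
      (sG n (Nat.zero_lt_of_lt hn)) (tG n (Nat.zero_lt_of_lt hn)) = 1 := by
  have hst := GnArc.st hn
  have hadj := adj_of_gnArc_of_mem hst hst.mem_edgeSet
  have hle := wdist_le_walkWeight (c := c2G n) hadj.toWalk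
  have hpos := wdist_pos (fun _ => c2G_ne_zero_of_mem_edgeSet) hst.ne ⟨hadj.toWalk⟩
  rw [walkWeight_toWalk, c2G_st hn] at hle
  omega

section Spanner

variable (S : Finset (Sym2 (Vtx n)))

/-- The `S`-distance from `v_i` to `w_i`. -/
def gadgetLen (i : Fin n) : ℕ :=
  if s(vG n i, wG n i) ∈ S then 2 ^ ((i : ℕ) + 1) else 2 ^ ((i : ℕ) + 2)

/-- The `S`-distance from `s = v_0` to `v_k`. -/
def spineLen (k : ℕ) : ℕ := k + ∑ i with i.val < k, gadgetLen S i

def stLen : ℕ := (n - 1) + ∑ i, gadgetLen S i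

/-- The `S`-distance from `s`. -/
def potential (x : Vtx n) : ℕ :=
  spineLen S x.1 + ![0, 2 ^ ((x.1 : ℕ) + 1), gadgetLen S x.1] x.2

variable {S}

lemma two_pow_le_gadgetLen (i : Fin n) : 2 ^ ((i : ℕ) + 1) ≤ gadgetLen S i := by
  unfold gadgetLen
  split_ifs
  exacts [le_rfl, Nat.pow_le_pow_right two_pos (by omega)]

lemma gadgetLen_le (i : Fin n) : gadgetLen S i ≤ 2 * 2 ^ ((i : ℕ) + 1) := by
  unfold gadgetLen
  split_ifs
  · exact Nat.le_mul_of_pos_left _ two_pos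
  · rw [pow_succ, mul_comm]

lemma spineLen_succ (k : ℕ) (hk : k < n) :
    spineLen S (k + 1) = spineLen S k + gadgetLen S ⟨k, hk⟩ + 1 := by
  have : (Finset.univ.filter fun i : Fin n => i.val < k + 1) =
      insert ⟨k, hk⟩ (Finset.univ.filter fun i : Fin n => i.val < k) := by
    ext i
    simp [Fin.ext_iff]
    omega
  rw [spineLen, spineLen, this, Finset.sum_insert (by simp)]
  ring

lemma spineLen_add_gadgetLen_last (h0 : 0 < n) :
    spineLen S (n - 1) + gadgetLen S ⟨n - 1, by omega⟩ = stLen S := by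
  have h := spineLen_succ (S := S) (n - 1) (by omega)
  have hall : spineLen S n = n + ∑ i, gadgetLen S i := by
    simp [spineLen]
  rw [Nat.sub_add_cancel h0, hall] at h
  rw [stLen]
  omega

lemma two_le_stLen (h0 : 0 < n) : 2 ≤ stLen S :=
  calc 2 ≤ gadgetLen S ⟨0, h0⟩ := two_pow_le_gadgetLen (n := n) ⟨0, h0⟩
    _ ≤ ∑ i, gadgetLen S i := Finset.single_le_sum (by simp) (Finset.mem_univ _)
    _ ≤ stLen S := Nat.le_add_left _ _

lemma stLen_cast (h0 : 0 < n) :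
    (stLen S : ℚ) = ((n : ℚ) - 1)
      + (∑ i ∈ Finset.univ.filter (fun i : Fin n => s(vG n i, wG n i) ∈ S), (2 : ℚ) ^ ((i : ℕ) + 1))
      + ∑ i ∈ Finset.univ.filter (fun i : Fin n => s(vG n i, wG n i) ∉ S),
          (2 : ℚ) ^ ((i : ℕ) + 2) := by
  simp only [stLen, gadgetLen]
  push_cast [Nat.cast_sub h0, apply_ite]
  rw [Finset.sum_ite]
  ring

@[simp] lemma potential_vG (i : Fin n) : potential S (vG n i) = spineLen S i := by
  simp [potential, vG]

@[simp] lemma potential_pG (i : Fin n) :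
    potential S (pG n i) = spineLen S i + 2 ^ ((i : ℕ) + 1) := by
  simp [potential, pG]

@[simp] lemma potential_wG (i : Fin n) :
    potential S (wG n i) = spineLen S i + gadgetLen S i := by
  simp [potential, wG]

lemma potential_sG (h0 : 0 < n) : potential S (sG n h0) = 0 := by
  simp [potential, sG, spineLen]

lemma potential_tG (h0 : 0 < n) : potential S (tG n h0) = stLen S := by
  simpa [potential, tG] using spineLen_add_gadgetLen_last (S := S) h0

end Spanner

end Gn

section MemX

variable {n : ℕ} {h0 : 0 < n} {S : Finset (Sym2 (Vtx n))} (hS : memX n h0 S) {a b : Vtx n}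
include hS

lemma mem_of_gnArc_of_c1G_eq_zero (h : GnArc n a b) (hc : c1G n s(a, b) = 0) : s(a, b) ∈ S :=
  hS.2.1 _ h.mem_edgeSet hc

lemma gnArc_or_gnArc_of_mem (hab : s(a, b) ∈ S) : GnArc n a b ∨ GnArc n b a :=
  gnArc_or_gnArc_of_c2G_ne_zero (mem_edgeSet_Gn.mp (hS.1.1 hab)).1

lemma potential_le_of_gnArc (h : GnArc n a b) (hab : s(a, b) ∈ S) :
    potential S b ≤ potential S a + c2G n s(a, b) ∧
      potential S a ≤ potential S b + c2G n s(a, b) := by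
  cases h with
  | vw i =>
    have : gadgetLen S i = 2 ^ ((i : ℕ) + 1) := if_pos hab
    simp only [potential_vG, potential_wG, c2G_vw, this]
    constructor <;> linarith
  | vp i =>
    simp only [potential_vG, potential_pG, c2G_vp]
    constructor <;> linarith [Nat.zero_le (2 ^ ((i : ℕ) + 1))]
  | pw i =>
    have := two_pow_le_gadgetLen (S := S) i
    have := gadgetLen_le (S := S) i
    simp only [potential_pG, potential_wG, c2G_pw]
    omega
  | wv i hi =>
    simp only [potential_wG, potential_vG, c2G_wv, spineLen_succ i i.isLt, Fin.eta]
    omega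
  | st hn => exact absurd hab hS.2.2

lemma potential_le_add_c2G (hab : s(a, b) ∈ S) :
    potential S b ≤ potential S a + c2G n s(a, b) := by
  rcases gnArc_or_gnArc_of_mem hS hab with h | h
  · exact (potential_le_of_gnArc hS h hab).1
  · rw [Sym2.eq_swap] at hab ⊢
    exact (potential_le_of_gnArc hS h hab).2

lemma exists_gadget_walk (i : Fin n) :
    ∃ p : (fromEdgeSet (S : Set (Sym2 (Vtx n)))).Walk (vG n i) (wG n i),
      walkWeight (c2G n) p = gadgetLen S i := by
  by_cases hvw : s(vG n i, wG n i) ∈ S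
  · exact ⟨(adj_of_gnArc_of_mem (.vw i) hvw).toWalk, by simp [gadgetLen, hvw]⟩
  · have hvp := mem_of_gnArc_of_c1G_eq_zero hS (.vp i) (c1G_vp i)
    have hpw := mem_of_gnArc_of_c1G_eq_zero hS (.pw i) (c1G_pw i)
    refine ⟨(adj_of_gnArc_of_mem (.vp i) hvp).toWalk.append
      (adj_of_gnArc_of_mem (.pw i) hpw).toWalk, ?_⟩
    simp [gadgetLen, hvw, pow_succ]
    ring

lemma exists_spine_walk (k : ℕ) (hk : k < n) :
    ∃ p : (fromEdgeSet (S : Set (Sym2 (Vtx n)))).Walk (sG n h0) (vG n ⟨k, hk⟩),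
      walkWeight (c2G n) p = spineLen S k := by
  induction k with
  | zero => exact ⟨Walk.nil, by simp [spineLen]; rfl⟩
  | succ k ih =>
    obtain ⟨p, hp⟩ := ih (by omega)
    obtain ⟨g, hg⟩ := exists_gadget_walk hS ⟨k, by omega⟩
    have hwv := mem_of_gnArc_of_c1G_eq_zero hS (.wv ⟨k, by omega⟩ hk) (c1G_wv _ _)
    refine ⟨(p.append g).append (adj_of_gnArc_of_mem (.wv _ hk) hwv).toWalk, ?_⟩
    simp [hp, hg, spineLen_succ k (by omega : k < n)]

lemma exists_st_walk :
    ∃ p : (fromEdgeSet (S : Set (Sym2 (Vtx n)))).Walk (sG n h0) (tG n h0),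
      walkWeight (c2G n) p = stLen S := by
  obtain ⟨p, hp⟩ := exists_spine_walk hS (n - 1) (by omega)
  obtain ⟨g, hg⟩ := exists_gadget_walk hS ⟨n - 1, by omega⟩
  exact ⟨p.append g, (walkWeight_append p g).trans
    (by rw [hp, hg, spineLen_add_gadgetLen_last h0])⟩

lemma wdist_sG_tG_spanner : wdist S (c2G n) (sG n h0) (tG n h0) = stLen S := by
  obtain ⟨p, hp⟩ := exists_st_walk hS
  refine le_antisymm (hp ▸ wdist_le_walkWeight p) ?_
  have := le_add_wdist (φ := potential S) (fun _ _ => potential_le_add_c2G hS) ⟨p⟩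
  rwa [potential_sG, potential_tG, zero_add] at this

lemma GnArc.exists_walk_le_stLen_mul (h : GnArc n a b) :
    ∃ q : (fromEdgeSet (S : Set (Sym2 (Vtx n)))).Walk a b,
      walkWeight (c2G n) q ≤ stLen S * c2G n s(a, b) := by
  have hst := two_le_stLen (S := S) h0
  have of_c1G_eq_zero : c1G n s(a, b) = 0 →
      ∃ q : (fromEdgeSet (S : Set (Sym2 (Vtx n)))).Walk a b,
        walkWeight (c2G n) q ≤ stLen S * c2G n s(a, b) := fun hc =>
    ⟨(adj_of_gnArc_of_mem h (mem_of_gnArc_of_c1G_eq_zero hS h hc)).toWalk,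
      by simpa using Nat.le_mul_of_pos_left _ (by omega)⟩
  cases h with
  | vw i =>
    obtain ⟨g, hg⟩ := exists_gadget_walk hS i
    refine ⟨g, hg ▸ (gadgetLen_le i).trans ?_⟩
    rw [c2G_vw]
    exact Nat.mul_le_mul_right _ hst
  | vp i => exact of_c1G_eq_zero (c1G_vp i)
  | pw i => exact of_c1G_eq_zero (c1G_pw i)
  | wv i hi => exact of_c1G_eq_zero (c1G_wv i hi)
  | st hn =>
    obtain ⟨p, hp⟩ := exists_st_walk hS
    exact ⟨p, by simp [hp, c2G_st hn]⟩

lemma exists_walk_le_stLen_mul (hab : s(a, b) ∈ (Gn n).edgeSet) :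
    ∃ q : (fromEdgeSet (S : Set (Sym2 (Vtx n)))).Walk a b,
      walkWeight (c2G n) q ≤ stLen S * c2G n s(a, b) := by
  rcases gnArc_or_gnArc_of_c2G_ne_zero (mem_edgeSet_Gn.mp hab).1 with h | h
  · exact h.exists_walk_le_stLen_mul hS
  · obtain ⟨q, hq⟩ := h.exists_walk_le_stLen_mul hS
    exact ⟨q.reverse, by rwa [walkWeight_reverse, Sym2.eq_swap]⟩

lemma GnArc.c1G_eq_zero (h : GnArc n a b) (hab : s(a, b) ∈ S)
    (hvw : ∀ i, s(a, b) ≠ s(vG n i, wG n i)) : c1G n s(a, b) = 0 := by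
  cases h
  case vw i => exact absurd rfl (hvw i)
  case st hn => exact absurd hab hS.2.2
  all_goals simp

lemma c1G_eq_zero_of_mem {e : Sym2 (Vtx n)} (he : e ∈ S) (hvw : ∀ i, e ≠ s(vG n i, wG n i)) :
    c1G n e = 0 := by
  induction e using Sym2.ind with
  | _ a b =>
    rcases gnArc_or_gnArc_of_mem hS he with h | h
    · exact h.c1G_eq_zero hS he hvw
    · rw [Sym2.eq_swap] at he ⊢
      exact h.c1G_eq_zero hS he fun i hi => hvw i (Sym2.eq_swap.trans hi)

lemma f1_eq_of_memX :
    f1 (c1G n) S = ∑ i ∈ Finset.univ.filter (fun i : Fin n => s(vG n i, wG n i) ∈ S),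
      (2 : ℤ) ^ ((i : ℕ) + 1) := by
  set T := Finset.univ.filter (fun i : Fin n => s(vG n i, wG n i) ∈ S)
  have hinj : Function.Injective fun i : Fin n => s(vG n i, wG n i) := fun i j hij => by
    simpa [vG, wG] using hij
  have hsub : T.image (fun i => s(vG n i, wG n i)) ⊆ S := by
    simp [T, Finset.image_subset_iff]
  rw [f1, ← Finset.sum_subset hsub, Finset.sum_image hinj.injOn]
  · simp
  · refine fun e he hT => c1G_eq_zero_of_mem hS he fun i hi => hT ?_
    exact Finset.mem_image.mpr ⟨i, by simpa [T, hi] using he, hi.symm⟩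

end MemX

/-- For `n ≥ 2` and a spanner `S ∈ X` of `G_n`, with
`T = { i : {v_i, w_i} ∈ S }`, one has `f1(S) = ∑_{i ∈ T} 2^i` and
`f2(S) = (n - 1) + ∑_{i ∈ T} 2^i + ∑_{i ∉ T} 2^(i+1)`
(indices `i : Fin n` correspond to `i + 1 ∈ {1, …, n}` in the paper). -/
theorem objectives_of_memX (n : ℕ) (hn : 2 ≤ n) (S : Finset (Sym2 (Vtx n)))
    (hS : memX n (by omega) S) :
    f1 (c1G n) S =
        ∑ i ∈ Finset.univ.filter (fun i : Fin n => s(vG n i, wG n i) ∈ S),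
          (2 : ℤ) ^ ((i : ℕ) + 1) ∧
      f2 (Gn n).edgeSet (↑S) (c2G n) =
        ((n : ℚ) - 1)
          + (∑ i ∈ Finset.univ.filter (fun i : Fin n => s(vG n i, wG n i) ∈ S),
              (2 : ℚ) ^ ((i : ℕ) + 1))
          + ∑ i ∈ Finset.univ.filter (fun i : Fin n => s(vG n i, wG n i) ∉ S),
              (2 : ℚ) ^ ((i : ℕ) + 2) := by
  refine ⟨f1_eq_of_memX hS, ?_⟩
  rw [← stLen_cast (by omega)]
  refine f2_eq_of_forall_le (fun _ _ _ => wdist_div_wdist_le fun _ _ => exists_walk_le_stLen_mul hS)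
    (GnArc.st hn).ne ?_
  rw [wdist_sG_tG_spanner hS, wdist_sG_tG_Gn hn, Nat.cast_one, div_one]

end MSpPaper
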